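/- arXiv:1808.02435 — 4 statements merged into one kernel-verified Lean document; each statement's English description precedes it below -/
import Mathlib

section
/- Let (v̄, w̄⁺, w̄⁻, b̄, ξ̄) be LP-feasible with objective value z = Obj(v̄, w̄⁺, w̄⁻, b̄, ξ̄), and suppose every LP-feasible tuple has objective value at least z (i.e., (v̄, w̄⁺, w̄⁻, b̄, ξ̄) is optimal for LP-FS-SVM). Let ᾱ : Fin m → ℝ satisfy ᾱ i ≥ 0 for all i and L(t; ᾱ) ≥ z for every relaxed-feasible tuple t (i.e., ᾱ is an optimal vector of dual multipliers for the soft-margin constraints (1)). Let j0 : Fin n with w̄⁺ j0 + w̄⁻ j0 = 0, and let w̃ > 0 satisfy (∑ j, v̄ j) + w̃ / (-(l j0)) ≤ B. Then every LP-feasible tuple (v, w⁺, w⁻, b, ξ) with w⁻ j0 = w̃ satisfies Obj(v, w⁺, w⁻, b, ξ) ≥ z + w̃ * (1 + ∑ i, ᾱ i * y i * x i j0). -/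
open Finset

/-- Objective of FS-SVM: sum of hyperplane coefficient magnitudes plus penalized deviations. -/
noncomputable def Obj {m n : ℕ} (C : ℝ) (v wp wm : Fin n → ℝ) (b : ℝ) (ξ : Fin m → ℝ) : ℝ :=
  (∑ j, (wp j + wm j)) + C * ∑ i, ξ i

/-- Feasibility for the LP relaxation LP-FS-SVM. -/
def LPFeasible {m n : ℕ} (x : Fin m → Fin n → ℝ) (y : Fin m → ℝ) (B : ℝ)
    (u l : Fin n → ℝ) (v wp wm : Fin n → ℝ) (b : ℝ) (ξ : Fin m → ℝ) : Prop :=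
  (∀ i, y i * ((∑ j, (wp j - wm j) * x i j) + b) ≥ 1 - ξ i) ∧
  (∑ j, v j) ≤ B ∧
  (∀ j, 0 ≤ wp j ∧ wp j ≤ u j * v j ∧ 0 ≤ wm j ∧ wm j ≤ -(l j) * v j) ∧
  (∀ i, 0 ≤ ξ i) ∧
  (∀ j, 0 ≤ v j ∧ v j ≤ 1)

/-- Feasibility for the mixed-integer problem FS-SVM. -/
def FSFeasible {m n : ℕ} (x : Fin m → Fin n → ℝ) (y : Fin m → ℝ) (B : ℝ)
    (u l : Fin n → ℝ) (v wp wm : Fin n → ℝ) (b : ℝ) (ξ : Fin m → ℝ) : Prop :=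
  (∀ i, y i * ((∑ j, (wp j - wm j) * x i j) + b) ≥ 1 - ξ i) ∧
  (∑ j, v j) ≤ B ∧
  (∀ j, 0 ≤ wp j ∧ wp j ≤ u j * v j ∧ 0 ≤ wm j ∧ wm j ≤ -(l j) * v j) ∧
  (∀ i, 0 ≤ ξ i) ∧
  (∀ j, v j = 0 ∨ v j = 1)

/-- Relaxed feasibility: all LP constraints except the soft-margin constraints (1). -/
def RelaxedFeasible {m n : ℕ} (B : ℝ) (u l : Fin n → ℝ)
    (v wp wm : Fin n → ℝ) (ξ : Fin m → ℝ) : Prop :=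
  (∑ j, v j) ≤ B ∧
  (∀ j, 0 ≤ wp j ∧ wp j ≤ u j * v j ∧ 0 ≤ wm j ∧ wm j ≤ -(l j) * v j) ∧
  (∀ i, 0 ≤ ξ i) ∧
  (∀ j, 0 ≤ v j ∧ v j ≤ 1)

/-- Lagrangian obtained by dualizing the soft-margin constraints (1). -/
noncomputable def Lag {m n : ℕ} (x : Fin m → Fin n → ℝ) (y : Fin m → ℝ) (C : ℝ)
    (v wp wm : Fin n → ℝ) (b : ℝ) (ξ : Fin m → ℝ) (α : Fin m → ℝ) : ℝ :=
  Obj C v wp wm b ξ +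
    ∑ i, α i * (1 - ξ i - y i * ((∑ j, (wp j - wm j) * x i j) + b))

/-!
Zeroing the coordinate `wm j0` of an LP-feasible point keeps it relaxed-feasible and moves the
Lagrangian linearly, by `-wm j0 * (1 + ∑ i, α i * y i * x i j0)`. Dual optimality bounds the
Lagrangian of the modified point below by `z`, while at the original point the dualized terms are
nonpositive, so the Lagrangian there is at most the objective.
-/

theorem Fintype.sum_apply_update {ι : Type*} [Fintype ι] [DecidableEq ι] {β : Type*}
    (φ : ι → β → ℝ) (f : ι → β) (j0 : ι) (t : β) :
    ∑ j, φ j (Function.update f j0 t j) = ∑ j, φ j (f j) + (φ j0 t - φ j0 (f j0)) := by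
  rw [← sub_eq_iff_eq_add', ← Finset.sum_sub_distrib, Finset.sum_eq_single j0]
  · simp
  · intro j _ hj
    simp [hj]
  · simp

section Lagrangian

variable {m n : ℕ} (x : Fin m → Fin n → ℝ) (y : Fin m → ℝ) (C : ℝ)
  (v wp wm : Fin n → ℝ) (b : ℝ) (ξ : Fin m → ℝ) (α : Fin m → ℝ)

theorem lag_le_obj (hα : ∀ i, 0 ≤ α i)
    (hmargin : ∀ i, y i * ((∑ j, (wp j - wm j) * x i j) + b) ≥ 1 - ξ i) :
    Lag x y C v wp wm b ξ α ≤ Obj C v wp wm b ξ := by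
  have hdualized : ∑ i, α i * (1 - ξ i - y i * ((∑ j, (wp j - wm j) * x i j) + b)) ≤ 0 :=
    sum_nonpos fun i _ ↦ mul_nonpos_of_nonneg_of_nonpos (hα i) (by linarith [hmargin i])
  unfold Lag
  linarith

theorem lag_update_wm (j0 : Fin n) (t : ℝ) :
    Lag x y C v wp (Function.update wm j0 t) b ξ α
      = Lag x y C v wp wm b ξ α + (t - wm j0) * (1 + ∑ i, α i * y i * x i j0) := by
  have hmargin : ∀ i, ∑ j, (wp j - Function.update wm j0 t j) * x i j
      = ∑ j, (wp j - wm j) * x i j - (t - wm j0) * x i j0 := fun i ↦ by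
    rw [Fintype.sum_apply_update (fun j w ↦ (wp j - w) * x i j)]
    ring
  have hterm : ∀ i, α i * (1 - ξ i - y i * ((∑ j, (wp j - wm j) * x i j
        - (t - wm j0) * x i j0) + b))
      = α i * (1 - ξ i - y i * ((∑ j, (wp j - wm j) * x i j) + b))
        + (t - wm j0) * (α i * y i * x i j0) := fun i ↦ by ring
  simp only [Lag, Obj, hmargin, hterm, Fintype.sum_apply_update (fun j w ↦ wp j + w), sum_add_distrib,
    ← mul_sum]
  ring

end Lagrangian

theorem RelaxedFeasible.update_wm_zero {m n : ℕ} {B : ℝ} {u l v wp wm : Fin n → ℝ}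
    {ξ : Fin m → ℝ} (h : RelaxedFeasible B u l v wp wm ξ) (j0 : Fin n) :
    RelaxedFeasible B u l v wp (Function.update wm j0 0) ξ := by
  obtain ⟨hbudget, hbox, hξ, hv⟩ := h
  refine ⟨hbudget, fun j ↦ ?_, hξ, hv⟩
  obtain ⟨hwp0, hwpu, hwm0, hwml⟩ := hbox j
  rcases eq_or_ne j j0 with rfl | hj
  · simp only [Function.update_self]
    exact ⟨hwp0, hwpu, le_rfl, hwm0.trans hwml⟩
  · simpa [hj] using hbox j

theorem LPFeasible.relaxedFeasible {m n : ℕ} {x : Fin m → Fin n → ℝ} {y : Fin m → ℝ} {B : ℝ}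
    {u l v wp wm : Fin n → ℝ} {b : ℝ} {ξ : Fin m → ℝ}
    (h : LPFeasible x y B u l v wp wm b ξ) : RelaxedFeasible B u l v wp wm ξ :=
  h.2

theorem stmt1_general
    (m n : ℕ) (x : Fin m → Fin n → ℝ) (y : Fin m → ℝ)
    (C : ℝ) (B : ℝ) (u l : Fin n → ℝ)
    (z : ℝ)
    (αb : Fin m → ℝ) (hα : ∀ i, 0 ≤ αb i)
    (hdual : ∀ (v wp wm : Fin n → ℝ) (b : ℝ) (ξ : Fin m → ℝ),
      RelaxedFeasible B u l v wp wm ξ → Lag x y C v wp wm b ξ αb ≥ z)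
    (j0 : Fin n)
    (wt : ℝ) :
    ∀ (v wp wm : Fin n → ℝ) (b : ℝ) (ξ : Fin m → ℝ),
      LPFeasible x y B u l v wp wm b ξ → wm j0 = wt →
      Obj C v wp wm b ξ ≥ z + wt * (1 + ∑ i, αb i * y i * x i j0) := by
  intro v wp wm b ξ hfeas hwm
  have hlower := hdual v wp _ b ξ (hfeas.relaxedFeasible.update_wm_zero j0)
  rw [lag_update_wm, hwm] at hlower
  have hupper := lag_le_obj x y C v wp wm b ξ αb hα hfeas.1
  linarith

theorem stmt1
    (m n : ℕ) (x : Fin m → Fin n → ℝ) (y : Fin m → ℝ)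
    (hy : ∀ i, y i = 1 ∨ y i = -1)
    (C : ℝ) (hC : 0 < C) (B : ℝ) (u l : Fin n → ℝ)
    (hu : ∀ j, 0 < u j) (hl : ∀ j, l j < 0)
    (vb wpb wmb : Fin n → ℝ) (bb : ℝ) (ξb : Fin m → ℝ)
    (hfeas : LPFeasible x y B u l vb wpb wmb bb ξb)
    (z : ℝ) (hz : z = Obj C vb wpb wmb bb ξb)
    (hopt : ∀ (v wp wm : Fin n → ℝ) (b : ℝ) (ξ : Fin m → ℝ),
      LPFeasible x y B u l v wp wm b ξ → Obj C v wp wm b ξ ≥ z)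
    (αb : Fin m → ℝ) (hα : ∀ i, 0 ≤ αb i)
    (hdual : ∀ (v wp wm : Fin n → ℝ) (b : ℝ) (ξ : Fin m → ℝ),
      RelaxedFeasible B u l v wp wm ξ → Lag x y C v wp wm b ξ αb ≥ z)
    (j0 : Fin n) (hj0 : wpb j0 + wmb j0 = 0)
    (wt : ℝ) (hwt : 0 < wt)
    (hbud : (∑ j, vb j) + wt / (-(l j0)) ≤ B) :
    ∀ (v wp wm : Fin n → ℝ) (b : ℝ) (ξ : Fin m → ℝ),
      LPFeasible x y B u l v wp wm b ξ → wm j0 = wt →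
      Obj C v wp wm b ξ ≥ z + wt * (1 + ∑ i, αb i * y i * x i j0) :=
  stmt1_general m n x y C B u l z αb hα hdual j0 wt
end

section
/- Let ᾱ : Fin m → ℝ satisfy ᾱ i ≥ 0 for all i, let z : ℝ, and suppose L(t; ᾱ) ≥ z for every relaxed-feasible tuple t. Let j0 : Fin n and w̃ ≥ 0. Then every relaxed-feasible tuple (v, w⁺, w⁻, b, ξ) with w⁺ j0 = w̃ satisfies L(v, w⁺, w⁻, b, ξ; ᾱ) ≥ z + w̃ * (1 - ∑ i, ᾱ i * y i * x i j0). -/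
/-!
Zeroing the coordinate `w⁺ j0` of a relaxed-feasible tuple keeps it relaxed-feasible, and the
Lagrangian is affine in `w⁺ j0` with slope `1 - ∑ i, α i * y i * x i j0`. Applying the dual bound `z`
to the zeroed tuple and adding back `w⁺ j0` times that slope gives the claim.
-/

open Finset

theorem Function.update_eq_add_ite {ι R : Type*} [DecidableEq ι] [AddCommGroup R]
    (f : ι → R) (j : ι) (c : R) :
    Function.update f j c = fun k => f k + if k = j then c - f j else 0 := by
  ext k
  by_cases hk : k = j <;> simp [hk]

theorem Lag_update_wp {m n : ℕ} (x : Fin m → Fin n → ℝ) (y : Fin m → ℝ) (C : ℝ)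
    (v wp wm : Fin n → ℝ) (b : ℝ) (ξ : Fin m → ℝ) (α : Fin m → ℝ) (j : Fin n) (c : ℝ) :
    Lag x y C v (Function.update wp j c) wm b ξ α =
      Lag x y C v wp wm b ξ α + (c - wp j) * (1 - ∑ i, α i * y i * x i j) := by
  rw [Function.update_eq_add_ite]
  set d := c - wp j
  have hobj : ∑ k, ((wp k + if k = j then d else 0) + wm k) = ∑ k, (wp k + wm k) + d := by
    simp only [add_right_comm _ (ite _ _ _), sum_add_distrib, sum_ite_eq', mem_univ, if_true]
  have hmargin (i : Fin m) : ∑ k, ((wp k + if k = j then d else 0) - wm k) * x i k =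
      ∑ k, (wp k - wm k) * x i k + d * x i j := by
    simp only [add_sub_right_comm _ (ite _ _ _), add_mul, ite_mul, zero_mul, sum_add_distrib,
      sum_ite_eq', mem_univ, if_true]
  have hterm (i : Fin m) :
      α i * (1 - ξ i - y i * (∑ k, (wp k - wm k) * x i k + d * x i j + b)) =
        α i * (1 - ξ i - y i * (∑ k, (wp k - wm k) * x i k + b)) - d * (α i * y i * x i j) := by
    ring
  simp only [Lag, Obj, hobj, hmargin, hterm, sum_sub_distrib, ← mul_sum]
  ring

theorem RelaxedFeasible.update_wp_zero {m n : ℕ} {B : ℝ} {u l v wp wm : Fin n → ℝ}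
    {ξ : Fin m → ℝ} (h : RelaxedFeasible B u l v wp wm ξ) (j : Fin n) :
    RelaxedFeasible B u l v (Function.update wp j 0) wm ξ := by
  obtain ⟨hB, hw, hξ, hv⟩ := h
  refine ⟨hB, fun k => ?_, hξ, hv⟩
  rcases eq_or_ne k j with rfl | hk
  · obtain ⟨hp, hpu, hm, hml⟩ := hw k
    simp only [Function.update_self]
    exact ⟨le_rfl, hp.trans hpu, hm, hml⟩
  · simpa [hk] using hw k

theorem stmt4_general
    (m n : ℕ) (x : Fin m → Fin n → ℝ) (y : Fin m → ℝ)
    (C : ℝ) (B : ℝ) (u l : Fin n → ℝ)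
    (αb : Fin m → ℝ) (z : ℝ)
    (hdual : ∀ (v wp wm : Fin n → ℝ) (b : ℝ) (ξ : Fin m → ℝ),
      RelaxedFeasible B u l v wp wm ξ → Lag x y C v wp wm b ξ αb ≥ z)
    (j0 : Fin n) (wt : ℝ) :
    ∀ (v wp wm : Fin n → ℝ) (b : ℝ) (ξ : Fin m → ℝ),
      RelaxedFeasible B u l v wp wm ξ → wp j0 = wt →
      Lag x y C v wp wm b ξ αb ≥ z + wt * (1 - ∑ i, αb i * y i * x i j0) := by
  intro v wp wm b ξ hfeas hwt
  have hzeroed := hdual v (Function.update wp j0 0) wm b ξ (hfeas.update_wp_zero j0)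
  rw [Lag_update_wp, hwt] at hzeroed
  linarith

theorem stmt4
    (m n : ℕ) (x : Fin m → Fin n → ℝ) (y : Fin m → ℝ)
    (hy : ∀ i, y i = 1 ∨ y i = -1)
    (C : ℝ) (hC : 0 < C) (B : ℝ) (u l : Fin n → ℝ)
    (hu : ∀ j, 0 < u j) (hl : ∀ j, l j < 0)
    (αb : Fin m → ℝ) (hα : ∀ i, 0 ≤ αb i) (z : ℝ)
    (hdual : ∀ (v wp wm : Fin n → ℝ) (b : ℝ) (ξ : Fin m → ℝ),
      RelaxedFeasible B u l v wp wm ξ → Lag x y C v wp wm b ξ αb ≥ z)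
    (j0 : Fin n) (wt : ℝ) (hwt : 0 ≤ wt) :
    ∀ (v wp wm : Fin n → ℝ) (b : ℝ) (ξ : Fin m → ℝ),
      RelaxedFeasible B u l v wp wm ξ → wp j0 = wt →
      Lag x y C v wp wm b ξ αb ≥ z + wt * (1 - ∑ i, αb i * y i * x i j0) :=
  stmt4_general m n x y C B u l αb z hdual j0 wt
end

section
/- Let (v, w⁺, w⁻, b, ξ) be FS-SVM-feasible and optimal, i.e., Obj(v, w⁺, w⁻, b, ξ) ≤ Obj(v', w'⁺, w'⁻, b', ξ') for every FS-SVM-feasible tuple (v', w'⁺, w'⁻, b', ξ'). Then for every j : Fin n, at most one of w⁺ j and w⁻ j is nonzero, i.e., w⁺ j * w⁻ j = 0. -/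
open Finset

/-!
If both `wp j` and `wm j` were positive, subtracting their minimum from each would keep every
constraint (only `wp - wm` enters the margin constraints, and the bounds only get easier) while
lowering the objective by twice that minimum. So at an optimum all these minima vanish.
-/

theorem FSFeasible.sub_min {m n : ℕ} {x : Fin m → Fin n → ℝ} {y : Fin m → ℝ} {B : ℝ}
    {u l v wp wm : Fin n → ℝ} {b : ℝ} {ξ : Fin m → ℝ}
    (h : FSFeasible x y B u l v wp wm b ξ) :
    FSFeasible x y B u l v (fun j => wp j - min (wp j) (wm j))
      (fun j => wm j - min (wp j) (wm j)) b ξ := by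
  obtain ⟨hmargin, hbudget, hbounds, hξ, hv⟩ := h
  refine ⟨fun i => ?_, hbudget, fun j => ?_, hξ, hv⟩
  · simpa only [sub_sub_sub_cancel_right] using hmargin i
  · obtain ⟨hp0, hpu, hm0, hml⟩ := hbounds j
    have hmin : 0 ≤ min (wp j) (wm j) := le_min hp0 hm0
    exact ⟨sub_nonneg.2 (min_le_left _ _), by linarith, sub_nonneg.2 (min_le_right _ _),
      by linarith⟩

theorem Obj_sub_min {m n : ℕ} (C : ℝ) (v wp wm : Fin n → ℝ) (b : ℝ) (ξ : Fin m → ℝ) :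
    Obj C v (fun j => wp j - min (wp j) (wm j)) (fun j => wm j - min (wp j) (wm j)) b ξ =
      Obj C v wp wm b ξ - 2 * ∑ j, min (wp j) (wm j) := by
  have hsum : ∑ j, (wp j - min (wp j) (wm j) + (wm j - min (wp j) (wm j))) =
      ∑ j, (wp j + wm j) - 2 * ∑ j, min (wp j) (wm j) := by
    rw [mul_sum, ← sum_sub_distrib]
    exact sum_congr rfl fun j _ => by ring
  rw [Obj, Obj, hsum]
  ring

theorem mul_eq_zero_of_min_eq_zero {α : Type*} [MulZeroClass α] [LinearOrder α] {a b : α} (h : min a b = 0) : a * b = 0 := by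
  rcases min_choice a b with hab | hab <;> rw [hab] at h <;> simp [h]

theorem stmt5_general
    (m n : ℕ) (x : Fin m → Fin n → ℝ) (y : Fin m → ℝ)
    (C : ℝ) (B : ℝ) (u l : Fin n → ℝ)
    (v wp wm : Fin n → ℝ) (b : ℝ) (ξ : Fin m → ℝ)
    (hfeas : FSFeasible x y B u l v wp wm b ξ)
    (hopt : ∀ (v' wp' wm' : Fin n → ℝ) (b' : ℝ) (ξ' : Fin m → ℝ),
      FSFeasible x y B u l v' wp' wm' b' ξ' →
      Obj C v wp wm b ξ ≤ Obj C v' wp' wm' b' ξ') :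
    ∀ j, wp j * wm j = 0 := by
  have hbounds := hfeas.2.2.1
  have hmin_nonneg : ∀ j ∈ univ, 0 ≤ min (wp j) (wm j) := fun j _ =>
    le_min (hbounds j).1 (hbounds j).2.2.1
  have hsum_nonpos : ∑ j, min (wp j) (wm j) ≤ 0 := by
    have := hopt _ _ _ _ _ hfeas.sub_min
    rw [Obj_sub_min] at this
    linarith
  have hmin_zero := (sum_eq_zero_iff_of_nonneg hmin_nonneg).1
    (le_antisymm hsum_nonpos (sum_nonneg hmin_nonneg))
  exact fun j => mul_eq_zero_of_min_eq_zero (hmin_zero j (mem_univ j))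

theorem stmt5
    (m n : ℕ) (x : Fin m → Fin n → ℝ) (y : Fin m → ℝ)
    (hy : ∀ i, y i = 1 ∨ y i = -1)
    (C : ℝ) (hC : 0 < C) (B : ℝ) (u l : Fin n → ℝ)
    (hu : ∀ j, 0 < u j) (hl : ∀ j, l j < 0)
    (v wp wm : Fin n → ℝ) (b : ℝ) (ξ : Fin m → ℝ)
    (hfeas : FSFeasible x y B u l v wp wm b ξ)
    (hopt : ∀ (v' wp' wm' : Fin n → ℝ) (b' : ℝ) (ξ' : Fin m → ℝ),
      FSFeasible x y B u l v' wp' wm' b' ξ' →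
      Obj C v wp wm b ξ ≤ Obj C v' wp' wm' b' ξ') :
    ∀ j, wp j * wm j = 0 :=
  stmt5_general m n x y C B u l v wp wm b ξ hfeas hopt
end

section
/- For every FS-SVM-feasible tuple (v, w⁺, w⁻, b, ξ), the number of nonzero hyperplane coefficients is bounded by the budget: the cardinality of the finite set {j : Fin n | w⁺ j - w⁻ j ≠ 0}, viewed as a real number, is at most B. -/
open Finset

theorem sum_eq_card_ne_zero_of_forall_eq_zero_or_eq_one {ι R : Type*} [Fintype ι]
    [AddCommMonoidWithOne R] [DecidableEq R] {v : ι → R} (hv : ∀ i, v i = 0 ∨ v i = 1) :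
    ∑ i, v i = #{i | v i ≠ 0} := by
  rw [natCast_card_filter]
  refine sum_congr rfl fun i _ => ?_
  rcases hv i with h | h <;> simp [h]

open scoped Classical in
theorem filter_sub_ne_zero_subset_filter_ne_zero {ι : Type*} [Fintype ι] {u l v wp wm : ι → ℝ}
    (hbox : ∀ j, 0 ≤ wp j ∧ wp j ≤ u j * v j ∧ 0 ≤ wm j ∧ wm j ≤ -(l j) * v j) :
    (univ.filter fun j => wp j - wm j ≠ 0) ⊆ univ.filter fun j => v j ≠ 0 := by
  intro j hj
  simp only [mem_filter, mem_univ, true_and] at hj ⊢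
  intro hv
  obtain ⟨hp₀, hp, hm₀, hm⟩ := hbox j
  rw [hv, mul_zero] at hp hm
  exact hj (by linarith)

open scoped Classical in
theorem stmt6_general
    (m n : ℕ) (x : Fin m → Fin n → ℝ) (y : Fin m → ℝ)
    (B : ℝ) (u l : Fin n → ℝ)
    (v wp wm : Fin n → ℝ) (b : ℝ) (ξ : Fin m → ℝ)
    (hfeas : FSFeasible x y B u l v wp wm b ξ) :
    ((Finset.univ.filter fun j => wp j - wm j ≠ 0).card : ℝ) ≤ B := by
  obtain ⟨-, hB, hbox, -, hbin⟩ := hfeas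
  calc _ ≤ (#{j | v j ≠ 0} : ℝ) := by
        exact_mod_cast card_le_card (filter_sub_ne_zero_subset_filter_ne_zero hbox)
    _ = ∑ j, v j := (sum_eq_card_ne_zero_of_forall_eq_zero_or_eq_one hbin).symm
    _ ≤ B := hB

open scoped Classical in
theorem stmt6
    (m n : ℕ) (x : Fin m → Fin n → ℝ) (y : Fin m → ℝ)
    (hy : ∀ i, y i = 1 ∨ y i = -1)
    (C : ℝ) (hC : 0 < C) (B : ℝ) (u l : Fin n → ℝ)
    (hu : ∀ j, 0 < u j) (hl : ∀ j, l j < 0)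
    (v wp wm : Fin n → ℝ) (b : ℝ) (ξ : Fin m → ℝ)
    (hfeas : FSFeasible x y B u l v wp wm b ξ) :
    ((Finset.univ.filter fun j => wp j - wm j ≠ 0).card : ℝ) ≤ B :=
  stmt6_general m n x y B u l v wp wm b ξ hfeas
end
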